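/- Let d ≥ 1, let Λ be a finitely generated additive submonoid of (Fin d → ℕ), and let n : Fin d → ℕ satisfy ⟨n,u⟩ > 0 for every u ∈ Λ with u ≠ 0. Then the associated graded ring gr(R_Λ) := ⨁_{k ∈ ℕ} p_k / p_{k+1}, with multiplication induced by that of R_Λ, is isomorphic as a graded ℂ-algebra to AddMonoidAlgebra ℂ Λ equipped with the grading whose k-th piece is H_k = span{X^u | u ∈ Λ, ⟨n,u⟩ = k}; moreover this isomorphism carries the maximal graded ideal ⨁_{k ≥ 1} p_k / p_{k+1} onto the maximal graded ideal 𝔪_Λ spanned by the monomials X^u with u ∈ Λ, u ≠ 0. -/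

import Mathlib

noncomputable section

/-- Coefficient of a multivariate power series at an exponent `u : Fin d → ℕ`. -/
def coeffFun (d : ℕ) (φ : MvPowerSeries (Fin d) ℂ) (u : Fin d → ℕ) : ℂ :=
  MvPowerSeries.coeff (R := ℂ) (Finsupp.equivFunOnFinite.symm u) φ

/-- Support of a multivariate power series, as a set of exponents `u : Fin d → ℕ`. -/
def suppS (d : ℕ) (φ : MvPowerSeries (Fin d) ℂ) : Set (Fin d → ℕ) :=
  {u | coeffFun d φ u ≠ 0}

/-- The weight `⟨n,u⟩ = ∑ i, n i * u i`. -/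
def wt {d : ℕ} (n u : Fin d → ℕ) : ℕ := ∑ i, n i * u i

/-- The `n`-weighted order of a power series: the least weight of an exponent
in its support (junk value `0` for `φ = 0`, by `Nat.sInf_empty`). -/
def ordn (d : ℕ) (n : Fin d → ℕ) (φ : MvPowerSeries (Fin d) ℂ) : ℕ :=
  sInf (wt n '' suppS d φ)

lemma suppS_add (d : ℕ) (φ ψ : MvPowerSeries (Fin d) ℂ) :
    suppS d (φ + ψ) ⊆ suppS d φ ∪ suppS d ψ := by
  intro u hu
  by_contra h
  simp only [Set.mem_union, suppS, Set.mem_setOf_eq, not_or, not_not] at h hu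
  apply hu
  show coeffFun d (φ + ψ) u = 0
  have : coeffFun d (φ + ψ) u = coeffFun d φ u + coeffFun d ψ u := by
    simp [coeffFun, map_add]
  rw [this, h.1, h.2, add_zero]

/-- `ℂ[[Λ]]`: the subalgebra of `MvPowerSeries (Fin d) ℂ` of series with support
contained in the additive submonoid `Λ`; it is the analytic algebra of the germ
of the affine toric variety `Z^Λ = Spec ℂ[Λ]` at its zero-dimensional orbit. -/
def RL (d : ℕ) (Λ : AddSubmonoid (Fin d → ℕ)) : Subalgebra ℂ (MvPowerSeries (Fin d) ℂ) where
  carrier := {φ | suppS d φ ⊆ (Λ : Set (Fin d → ℕ))}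
  zero_mem' := by
    intro u hu
    exact absurd (by simp [coeffFun]) hu
  one_mem' := by
    intro u hu
    have h : coeffFun d 1 u ≠ 0 := hu
    rw [coeffFun, MvPowerSeries.coeff_one] at h
    have : Finsupp.equivFunOnFinite.symm u = 0 := by
      by_contra hne; exact h (if_neg hne)
    have hu0 : u = 0 := by
      have := congrArg Finsupp.equivFunOnFinite this
      rw [Equiv.apply_symm_apply] at this
      exact this
    rw [hu0]; exact Λ.zero_mem
  add_mem' := by
    intro φ ψ hφ hψ u hu
    rcases suppS_add d φ ψ hu with h | h
    · exact hφ h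
    · exact hψ h
  mul_mem' := by
    intro φ ψ hφ hψ u hu
    have h : coeffFun d (φ * ψ) u ≠ 0 := hu
    rw [coeffFun, MvPowerSeries.coeff_mul] at h
    obtain ⟨p, hp, hne⟩ := Finset.exists_ne_zero_of_sum_ne_zero h
    rw [Finset.HasAntidiagonal.mem_antidiagonal] at hp
    have h1 : Finsupp.equivFunOnFinite p.1 ∈ Λ := by
      apply hφ
      show coeffFun d φ _ ≠ 0
      rw [coeffFun, Equiv.symm_apply_apply]
      exact left_ne_zero_of_mul hne
    have h2 : Finsupp.equivFunOnFinite p.2 ∈ Λ := by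
      apply hψ
      show coeffFun d ψ _ ≠ 0
      rw [coeffFun, Equiv.symm_apply_apply]
      exact right_ne_zero_of_mul hne
    have hsum : Finsupp.equivFunOnFinite p.1 + Finsupp.equivFunOnFinite p.2 = u := by
      have := congrArg Finsupp.equivFunOnFinite hp
      rw [Equiv.apply_symm_apply] at this
      rw [← this]
      exact (Finsupp.coe_add p.1 p.2).symm
    rw [← hsum]
    exact Λ.add_mem h1 h2
  algebraMap_mem' := by
    intro c u hu
    have h : coeffFun d (algebraMap ℂ (MvPowerSeries (Fin d) ℂ) c) u ≠ 0 := hu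
    rw [coeffFun] at h
    rw [show (algebraMap ℂ (MvPowerSeries (Fin d) ℂ) c) = MvPowerSeries.C (σ := Fin d) (R := ℂ) c from rfl,
      MvPowerSeries.coeff_C] at h
    have : Finsupp.equivFunOnFinite.symm u = 0 := by
      by_contra hne; exact h (if_neg hne)
    have hu0 : u = 0 := by
      have := congrArg Finsupp.equivFunOnFinite this
      rw [Equiv.apply_symm_apply] at this
      exact this
    rw [hu0]; exact Λ.zero_mem

lemma suppS_nonempty (d : ℕ) (φ : MvPowerSeries (Fin d) ℂ) (hφ : φ ≠ 0) :
    (suppS d φ).Nonempty := by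
  have : ∃ v : Fin d →₀ ℕ, MvPowerSeries.coeff (R := ℂ) v φ ≠ 0 := by
    by_contra h
    push_neg at h
    exact hφ (MvPowerSeries.ext h)
  obtain ⟨v, hv⟩ := this
  refine ⟨Finsupp.equivFunOnFinite v, ?_⟩
  show coeffFun d φ _ ≠ 0
  rw [coeffFun, Equiv.symm_apply_apply]
  exact hv

lemma ordn_le (d : ℕ) (n : Fin d → ℕ) (φ : MvPowerSeries (Fin d) ℂ) (u : Fin d → ℕ)
    (hu : u ∈ suppS d φ) : ordn d n φ ≤ wt n u :=
  Nat.sInf_le ⟨u, hu, rfl⟩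

lemma le_ordn (d : ℕ) (n : Fin d → ℕ) (φ : MvPowerSeries (Fin d) ℂ) (k : ℕ) (hφ : φ ≠ 0)
    (h : ∀ u ∈ suppS d φ, k ≤ wt n u) : k ≤ ordn d n φ := by
  apply le_csInf
  · exact (suppS_nonempty d φ hφ).image _
  · rintro b ⟨u, hu, rfl⟩
    exact h u hu

lemma suppS_smul (d : ℕ) (c : ℂ) (φ : MvPowerSeries (Fin d) ℂ) :
    suppS d (c • φ) ⊆ suppS d φ := by
  intro u hu
  have h : coeffFun d (c • φ) u ≠ 0 := hu
  have : coeffFun d (c • φ) u = c * coeffFun d φ u := by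
    simp [coeffFun]
  rw [this] at h
  exact right_ne_zero_of_mul h

/-- The `k`-th step `p_k = {φ ∈ R | φ = 0 ∨ ord_n φ ≥ k}` of the filtration of a
subalgebra `R` of the power series ring induced by the `n`-weighted order,
as a `ℂ`-submodule of the power series ring. -/
def pP (d : ℕ) (R : Subalgebra ℂ (MvPowerSeries (Fin d) ℂ)) (n : Fin d → ℕ) (k : ℕ) :
    Submodule ℂ (MvPowerSeries (Fin d) ℂ) where
  carrier := {φ | φ ∈ R ∧ (φ = 0 ∨ k ≤ ordn d n φ)}
  zero_mem' := ⟨R.zero_mem, Or.inl rfl⟩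
  add_mem' := by
    rintro φ ψ ⟨hφR, hφ⟩ ⟨hψR, hψ⟩
    refine ⟨R.add_mem hφR hψR, ?_⟩
    by_cases h0 : φ + ψ = 0
    · exact Or.inl h0
    · refine Or.inr (le_ordn d n _ k h0 ?_)
      intro u hu
      rcases suppS_add d φ ψ hu with h | h
      · rcases hφ with h1 | h1
        · exact absurd h (by simp [h1, suppS, coeffFun])
        · exact le_trans h1 (ordn_le d n φ u h)
      · rcases hψ with h1 | h1
        · exact absurd h (by simp [h1, suppS, coeffFun])
        · exact le_trans h1 (ordn_le d n ψ u h)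
  smul_mem' := by
    rintro c φ ⟨hφR, hφ⟩
    refine ⟨R.smul_mem hφR c, ?_⟩
    by_cases h0 : c • φ = 0
    · exact Or.inl h0
    · refine Or.inr ?_
      rcases hφ with h1 | h1
      · exact absurd (by rw [h1, smul_zero]) h0
      · refine le_ordn d n _ k h0 ?_
        intro u hu
        exact le_trans h1 (ordn_le d n φ u (suppS_smul d c φ hu))

/-- The quotient module `p_k / p_{k+1}`. -/
abbrev grPiece (d : ℕ) (R : Subalgebra ℂ (MvPowerSeries (Fin d) ℂ)) (n : Fin d → ℕ)
    (k : ℕ) :=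
  ↥(pP d R n k) ⧸ (pP d R n (k + 1)).comap (pP d R n k).subtype

/-- `H_k`: the `ℂ`-span in `AddMonoidAlgebra ℂ Λ` of the monomials `X^u`
with `u ∈ Λ` and `⟨n,u⟩ = k`. -/
def HkSub (d : ℕ) (Λ : AddSubmonoid (Fin d → ℕ)) (n : Fin d → ℕ) (k : ℕ) :
    Submodule ℂ (AddMonoidAlgebra ℂ ↥Λ) :=
  Submodule.span ℂ {x | ∃ u : ↥Λ, wt n (u : Fin d → ℕ) = k ∧ x = AddMonoidAlgebra.single u 1}

/-- The maximal graded ideal `𝔪_Λ` of `AddMonoidAlgebra ℂ Λ`, spanned by the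
monomials `X^u` with `u ∈ Λ`, `u ≠ 0`. -/
def mIdl (d : ℕ) (Λ : AddSubmonoid (Fin d → ℕ)) : Ideal (AddMonoidAlgebra ℂ ↥Λ) :=
  Ideal.span {x | ∃ u : ↥Λ, u ≠ 0 ∧ x = AddMonoidAlgebra.single u 1}

/-- The family `e` of `ℂ`-linear isomorphisms `p_k/p_{k+1} ≃ H_k` realizes the canonical
graded isomorphism `gr R ≅ ℂ[Λ]`: each `e k` sends the class of `φ` to its `n`-initial
form `in_n φ` (and the zero class to `0`), and the family is unital and multiplicative
with respect to the multiplication induced by that of `R`. -/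
def IsGradedInitialFormIso (d : ℕ) (R : Subalgebra ℂ (MvPowerSeries (Fin d) ℂ))
    (Λ : AddSubmonoid (Fin d → ℕ)) (n : Fin d → ℕ)
    (e : ∀ k : ℕ, grPiece d R n k ≃ₗ[ℂ] ↥(HkSub d Λ n k)) : Prop :=
  (∀ (k : ℕ) (φ : MvPowerSeries (Fin d) ℂ) (hφ : φ ∈ pP d R n k),
      (fun u : ↥Λ =>
        ((e k (Submodule.Quotient.mk ⟨φ, hφ⟩) : ↥(HkSub d Λ n k)) :
          AddMonoidAlgebra ℂ ↥Λ).coeff u) =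
        fun u : ↥Λ => if wt n (u : Fin d → ℕ) = k then coeffFun d φ (u : Fin d → ℕ) else 0) ∧
  (∀ (k l : ℕ) (φ ψ : MvPowerSeries (Fin d) ℂ) (hφ : φ ∈ pP d R n k)
      (hψ : ψ ∈ pP d R n l) (hφψ : φ * ψ ∈ pP d R n (k + l)),
      ((e (k + l) (Submodule.Quotient.mk ⟨φ * ψ, hφψ⟩) : ↥(HkSub d Λ n (k + l))) :
          AddMonoidAlgebra ℂ ↥Λ) =
        ((e k (Submodule.Quotient.mk ⟨φ, hφ⟩) : ↥(HkSub d Λ n k)) : AddMonoidAlgebra ℂ ↥Λ) *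
        ((e l (Submodule.Quotient.mk ⟨ψ, hψ⟩) : ↥(HkSub d Λ n l)) : AddMonoidAlgebra ℂ ↥Λ)) ∧
  (∀ h1 : (1 : MvPowerSeries (Fin d) ℂ) ∈ pP d R n 0,
      ((e 0 (Submodule.Quotient.mk ⟨1, h1⟩) : ↥(HkSub d Λ n 0)) : AddMonoidAlgebra ℂ ↥Λ) =
        1)

/-!
Positivity of `n` on the generators of `Λ` bounds every `u ∈ Λ` of weight `k` by `k` times the
sum of the generators, so the weight-`k` part of a series supported on `Λ` (its `n`-initial form)
is a polynomial. Viewing `ℂ[Λ]` inside the power series ring as the polynomials supported on `Λ`,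
the initial form is the weighted homogeneous component, which is multiplicative on `p_k × p_l`,
vanishes exactly on `p_{k+1}`, and restricts to the identity on the weight-`k` polynomials. The
positive part of the resulting grading of `ℂ[Λ]` and the ideal `𝔪_Λ` both consist of the
elements without constant term, since `0` is not a sum `v + u` in `Λ` with `u ≠ 0`.
-/

open MvPowerSeries

section Weight

variable {d : ℕ}

def wtHom (n : Fin d → ℕ) : (Fin d → ℕ) →+ ℕ where
  toFun := wt n
  map_zero' := by simp [wt]
  map_add' u v := by simp [wt, mul_add, Finset.sum_add_distrib]

lemma wt_add (n u v : Fin d → ℕ) : wt n (u + v) = wt n u + wt n v := map_add (wtHom n) u v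

lemma weight_equivFunOnFinite_symm (n u : Fin d → ℕ) :
    Finsupp.weight n (Finsupp.equivFunOnFinite.symm u) = wt n u := by
  simp [Finsupp.weight_apply, Finsupp.sum_fintype, wt, mul_comm]

lemma weight_eq_wt (n : Fin d → ℕ) (v : Fin d →₀ ℕ) :
    Finsupp.weight n v = wt n (Finsupp.equivFunOnFinite v) := by
  rw [← weight_equivFunOnFinite_symm, Equiv.symm_apply_apply]

lemma le_wt_smul_sum_of_mem_closure {n : Fin d → ℕ} {s : Finset (Fin d → ℕ)}
    (hs : ∀ g ∈ s, g ≠ 0 → 0 < wt n g) {u : Fin d → ℕ}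
    (hu : u ∈ AddSubmonoid.closure (s : Set (Fin d → ℕ))) :
    u ≤ wt n u • ∑ g ∈ s, g := by
  induction hu using AddSubmonoid.closure_induction with
  | mem g hg =>
    rcases eq_or_ne g 0 with rfl | hg0
    · exact zero_le
    · calc g ≤ ∑ g ∈ s, g := Finset.single_le_sum (f := id) (fun _ _ => zero_le) hg
        _ ≤ wt n g • ∑ g ∈ s, g := le_smul_of_one_le_left zero_le (hs g hg hg0)
  | zero => exact zero_le
  | add u v _ _ hu hv =>
    calc u + v ≤ wt n u • ∑ g ∈ s, g + wt n v • ∑ g ∈ s, g := add_le_add hu hv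
      _ = wt n (u + v) • ∑ g ∈ s, g := by rw [wt_add, add_smul]

lemma finite_setOf_wt_eq {Λ : AddSubmonoid (Fin d → ℕ)} (hΛ : Λ.FG) {n : Fin d → ℕ}
    (hn : ∀ u ∈ Λ, u ≠ 0 → 0 < wt n u) (k : ℕ) :
    {u : Λ | wt n (u : Fin d → ℕ) = k}.Finite := by
  obtain ⟨s, rfl⟩ := hΛ
  have hs : ∀ g ∈ s, g ≠ 0 → 0 < wt n g := fun g hg => hn g (AddSubmonoid.subset_closure hg)
  refine ((Set.finite_Iic (k • ∑ g ∈ s, g)).preimage Subtype.val_injective.injOn).subset ?_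
  rintro u rfl
  exact le_wt_smul_sum_of_mem_closure hs u.2

end Weight

section PowerSeries

lemma MvPowerSeries.IsWeightedHomogeneous.le_weightedOrder {σ R : Type*} [CommSemiring R]
    {w : σ → ℕ} {f : MvPowerSeries σ R} {p : ℕ} (hf : f.IsWeightedHomogeneous w p) :
    (p : ℕ∞) ≤ f.weightedOrder w :=
  nat_le_weightedOrder w fun _ hd => hf.coeff_eq_zero hd.ne

lemma weightedHomogeneousComponent_eq_zero_iff {σ R : Type*} [CommSemiring R] {w : σ → ℕ}
    {f : MvPowerSeries σ R} {p : ℕ} (hp : (p : ℕ∞) ≤ f.weightedOrder w) :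
    weightedHomogeneousComponent w p f = 0 ↔ ((p + 1 : ℕ) : ℕ∞) ≤ f.weightedOrder w := by
  rw [Nat.cast_add_one, ENat.add_one_le_iff (ENat.natCast_ne_top p)]
  exact ⟨fun h => hp.lt_of_ne fun he => weightedHomogeneousComponent_of_weightedOrder he h,
    weightedHomogeneousComponent_of_lt_weightedOrder_eq_zero⟩

variable {d : ℕ} {n : Fin d → ℕ}

lemma coeff_eq_coeffFun (φ : MvPowerSeries (Fin d) ℂ) (v : Fin d →₀ ℕ) :
    coeff v φ = coeffFun d φ (Finsupp.equivFunOnFinite v) := by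
  rw [coeffFun, Equiv.symm_apply_apply]

lemma coeffFun_injective : Function.Injective (coeffFun d) := fun φ ψ h =>
  MvPowerSeries.ext fun v => by rw [coeff_eq_coeffFun, coeff_eq_coeffFun, h]

lemma coeffFun_weightedHomogeneousComponent (k : ℕ) (φ : MvPowerSeries (Fin d) ℂ)
    (u : Fin d → ℕ) :
    coeffFun d (weightedHomogeneousComponent n k φ) u =
      if wt n u = k then coeffFun d φ u else 0 := by
  rw [coeffFun, coeff_weightedHomogeneousComponent, weight_equivFunOnFinite_symm, coeffFun]

lemma coeffFun_eq_zero_of_mem_RL {Λ : AddSubmonoid (Fin d → ℕ)} {φ : MvPowerSeries (Fin d) ℂ}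
    (hφ : φ ∈ RL d Λ) {u : Fin d → ℕ} (hu : u ∉ Λ) : coeffFun d φ u = 0 :=
  not_not.1 (mt (@hφ u) hu)

lemma mem_pP_iff_le_weightedOrder {R : Subalgebra ℂ (MvPowerSeries (Fin d) ℂ)} {k : ℕ}
    {φ : MvPowerSeries (Fin d) ℂ} :
    φ ∈ pP d R n k ↔ φ ∈ R ∧ (k : ℕ∞) ≤ φ.weightedOrder n := by
  refine and_congr_right fun _ => ⟨?_, fun h => ?_⟩
  · rintro (rfl | h)
    · simp
    · refine nat_le_weightedOrder n fun v hv => of_not_not fun hc => ?_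
      have hle := ordn_le d n φ _ (coeff_eq_coeffFun φ v ▸ hc)
      rw [← weight_eq_wt] at hle
      omega
  · rcases eq_or_ne φ 0 with h0 | h0
    · exact Or.inl h0
    refine Or.inr (le_ordn d n φ k h0 fun u hu => ?_)
    have := h.trans (weightedOrder_le n hu)
    rwa [weight_equivFunOnFinite_symm, Nat.cast_le] at this

end PowerSeries

section Grading

variable {d : ℕ}

lemma HkSub_eq_gradeBy (Λ : AddSubmonoid (Fin d → ℕ)) (n : Fin d → ℕ) :
    HkSub d Λ n = AddMonoidAlgebra.gradeBy ℂ ((wtHom n).comp Λ.subtype) := by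
  ext k x
  constructor
  · intro hx
    refine Submodule.span_le.2 ?_ hx
    rintro _ ⟨u, rfl, rfl⟩ m hm
    rw [AddMonoidAlgebra.coeff_single, Finsupp.support_single _ one_ne_zero,
      Finset.mem_singleton] at hm
    rw [hm]
    rfl
  · intro hx
    rw [← AddMonoidAlgebra.sum_coeff_single x]
    refine Submodule.finsuppSum_mem _ _ _ _ fun u hu => ?_
    rw [← mul_one (x.coeff u), ← AddMonoidAlgebra.smul_single']
    exact Submodule.smul_mem _ _
      (Submodule.subset_span ⟨u, hx u (Finsupp.mem_support_iff.2 hu), rfl⟩)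

lemma isInternal_HkSub (Λ : AddSubmonoid (Fin d → ℕ)) (n : Fin d → ℕ) :
    DirectSum.IsInternal (HkSub d Λ n) := by
  rw [HkSub_eq_gradeBy]
  exact AddMonoidAlgebra.gradeBy.isInternal _

lemma iSup_gradeBy_pos_eq_supported {R M : Type*} [CommSemiring R] [Zero M] {f : M → ℕ}
    (hf : ∀ m, 0 < f m ↔ m ≠ 0) :
    ⨆ k : ℕ, ⨆ _ : 1 ≤ k, AddMonoidAlgebra.gradeBy R f k =
      AddMonoidAlgebra.supported R R {0}ᶜ := by
  apply le_antisymm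
  · exact iSup₂_le fun k hk x hx m hm => (hf m).1 ((hx m hm).symm ▸ hk)
  · intro x hx
    rw [← AddMonoidAlgebra.sum_coeff_single x]
    refine Submodule.finsuppSum_mem _ _ _ _ fun m hm => ?_
    exact Submodule.mem_iSup_of_mem (f m) <|
      Submodule.mem_iSup_of_mem ((hf m).2 (hx (Finsupp.mem_support_iff.2 hm)))
        (AddMonoidAlgebra.single_mem_gradeBy _ _ _)

lemma coe_mIdl (Λ : AddSubmonoid (Fin d → ℕ)) :
    (mIdl d Λ : Set (AddMonoidAlgebra ℂ Λ)) = AddMonoidAlgebra.supported ℂ ℂ ({0}ᶜ : Set Λ) := by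
  have hgen : {x | ∃ u : Λ, u ≠ 0 ∧ x = AddMonoidAlgebra.single u 1} =
      AddMonoidAlgebra.of' ℂ Λ '' {0}ᶜ := by
    ext x
    simp [AddMonoidAlgebra.of', eq_comm]
  ext x
  simp only [SetLike.mem_coe, mIdl, hgen, AddMonoidAlgebra.mem_ideal_span_of'_image,
    AddMonoidAlgebra.mem_supported, Set.subset_def]
  refine forall₂_congr fun m _ => ⟨?_, fun hm => ⟨m, hm, 0, (zero_add m).symm⟩⟩
  rintro ⟨m', hm', v, rfl⟩ h0
  exact hm' (Subtype.ext (add_eq_zero.1 (congrArg Subtype.val h0)).2)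

lemma iSup_HkSub_eq_mIdl {Λ : AddSubmonoid (Fin d → ℕ)} {n : Fin d → ℕ}
    (hn : ∀ u ∈ Λ, u ≠ 0 → 0 < wt n u) :
    ((⨆ k : ℕ, ⨆ _ : 1 ≤ k, HkSub d Λ n k : Submodule ℂ (AddMonoidAlgebra ℂ Λ)) :
      Set (AddMonoidAlgebra ℂ Λ)) = mIdl d Λ := by
  rw [coe_mIdl, HkSub_eq_gradeBy, iSup_gradeBy_pos_eq_supported]
  intro u
  refine ⟨fun hu h0 => ?_, fun hu => hn u u.2 (fun h => hu (Subtype.ext h))⟩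
  simp [h0] at hu

end Grading

section MonomialEmbedding

variable {d : ℕ} {Λ : AddSubmonoid (Fin d → ℕ)} {n : Fin d → ℕ}

variable (Λ) in
def toMvPowerSeries : AddMonoidAlgebra ℂ Λ →+* MvPowerSeries (Fin d) ℂ :=
  MvPolynomial.coeToMvPowerSeries.ringHom.comp <| AddMonoidAlgebra.mapDomainRingHom ℂ <|
    (Finsupp.linearEquivFunOnFinite ℕ ℕ (Fin d)).symm.toLinearMap.toAddMonoidHom.comp Λ.subtype

lemma toMvPowerSeries_apply (x : AddMonoidAlgebra ℂ Λ) :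
    toMvPowerSeries Λ x = (↑(AddMonoidAlgebra.mapDomain
      (fun u : Λ => Finsupp.equivFunOnFinite.symm (u : Fin d → ℕ)) x) : MvPolynomial (Fin d) ℂ) :=
  rfl

lemma coeffFun_toMvPowerSeries (x : AddMonoidAlgebra ℂ Λ) (u : Λ) :
    coeffFun d (toMvPowerSeries Λ x) u = x.coeff u := by
  rw [toMvPowerSeries_apply, coeffFun, MvPolynomial.coeff_coe]
  exact Finsupp.mapDomain_apply
    (Finsupp.equivFunOnFinite.symm.injective.comp Subtype.val_injective) x.coeff u

lemma coeffFun_toMvPowerSeries_of_notMem (x : AddMonoidAlgebra ℂ Λ) {u : Fin d → ℕ}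
    (hu : u ∉ Λ) : coeffFun d (toMvPowerSeries Λ x) u = 0 := by
  rw [toMvPowerSeries_apply, coeffFun, MvPolynomial.coeff_coe]
  refine Finsupp.mapDomain_of_notMem_range _ _ ?_
  rintro ⟨v, hv⟩
  exact hu (Finsupp.equivFunOnFinite.symm.injective hv ▸ v.2)

lemma toMvPowerSeries_injective : Function.Injective (toMvPowerSeries Λ) := fun x y h => by
  ext u
  rw [← coeffFun_toMvPowerSeries, h, coeffFun_toMvPowerSeries]

lemma toMvPowerSeries_mem_RL (x : AddMonoidAlgebra ℂ Λ) : toMvPowerSeries Λ x ∈ RL d Λ :=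
  fun _ hu => of_not_not fun h => hu (coeffFun_toMvPowerSeries_of_notMem x h)

lemma isWeightedHomogeneous_toMvPowerSeries {k : ℕ} {x : AddMonoidAlgebra ℂ Λ}
    (hx : x ∈ HkSub d Λ n k) : (toMvPowerSeries Λ x).IsWeightedHomogeneous n k := by
  intro v hv
  rw [coeff_eq_coeffFun] at hv
  rw [weight_eq_wt]
  by_cases hu : Finsupp.equivFunOnFinite v ∈ Λ
  · rw [HkSub_eq_gradeBy] at hx
    rw [coeffFun_toMvPowerSeries x ⟨_, hu⟩] at hv
    exact hx _ (Finsupp.mem_support_iff.2 hv)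
  · exact absurd (coeffFun_toMvPowerSeries_of_notMem x hu) hv

lemma toMvPowerSeries_mem_pP {k : ℕ} {x : AddMonoidAlgebra ℂ Λ} (hx : x ∈ HkSub d Λ n k) :
    toMvPowerSeries Λ x ∈ pP d (RL d Λ) n k :=
  mem_pP_iff_le_weightedOrder.2 ⟨toMvPowerSeries_mem_RL x,
    IsWeightedHomogeneous.le_weightedOrder (isWeightedHomogeneous_toMvPowerSeries hx)⟩

lemma one_mem_HkSub_zero : (1 : AddMonoidAlgebra ℂ Λ) ∈ HkSub d Λ n 0 :=
  Submodule.subset_span ⟨0, by simp [wt], rfl⟩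

end MonomialEmbedding

section InitialForm

variable {d : ℕ} {Λ : AddSubmonoid (Fin d → ℕ)} {n : Fin d → ℕ}
  (hfin : ∀ k, {u : Λ | wt n (u : Fin d → ℕ) = k}.Finite)

def initialForm (k : ℕ) : MvPowerSeries (Fin d) ℂ →ₗ[ℂ] AddMonoidAlgebra ℂ Λ :=
  ∑ u ∈ (hfin k).toFinset,
    (coeff (Finsupp.equivFunOnFinite.symm (u : Fin d → ℕ))).smulRight (AddMonoidAlgebra.single u 1)

lemma coeff_initialForm (k : ℕ) (φ : MvPowerSeries (Fin d) ℂ) (u : Λ) :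
    (initialForm hfin k φ).coeff u = if wt n (u : Fin d → ℕ) = k then coeffFun d φ u else 0 := by
  simp [initialForm, coeffFun, AddMonoidAlgebra.coeff_sum, Finsupp.single_apply]

lemma initialForm_mem_HkSub (k : ℕ) (φ : MvPowerSeries (Fin d) ℂ) :
    initialForm hfin k φ ∈ HkSub d Λ n k := by
  simp only [initialForm, LinearMap.sum_apply, LinearMap.smulRight_apply]
  refine Submodule.sum_mem _ fun u hu =>
    Submodule.smul_mem _ _ (Submodule.subset_span ⟨u, ?_, rfl⟩)
  simpa using hu

lemma toMvPowerSeries_initialForm (k : ℕ) {φ : MvPowerSeries (Fin d) ℂ} (hφ : φ ∈ RL d Λ) :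
    toMvPowerSeries Λ (initialForm hfin k φ) = weightedHomogeneousComponent n k φ := by
  refine coeffFun_injective (funext fun u => ?_)
  rw [coeffFun_weightedHomogeneousComponent]
  by_cases hu : u ∈ Λ
  · exact (coeffFun_toMvPowerSeries _ ⟨u, hu⟩).trans (coeff_initialForm hfin k φ ⟨u, hu⟩)
  · rw [coeffFun_toMvPowerSeries_of_notMem _ hu, coeffFun_eq_zero_of_mem_RL hφ hu, ite_self]

lemma initialForm_toMvPowerSeries {k : ℕ} {x : AddMonoidAlgebra ℂ Λ} (hx : x ∈ HkSub d Λ n k) :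
    initialForm hfin k (toMvPowerSeries Λ x) = x := by
  apply toMvPowerSeries_injective
  rw [toMvPowerSeries_initialForm hfin k (toMvPowerSeries_mem_RL x),
    ← isWeightedHomogeneous_iff_eq_weightedHomogeneousComponent.1
      (isWeightedHomogeneous_toMvPowerSeries hx)]

lemma initialForm_one : initialForm hfin 0 (1 : MvPowerSeries (Fin d) ℂ) = 1 := by
  rw [← map_one (toMvPowerSeries Λ), initialForm_toMvPowerSeries hfin one_mem_HkSub_zero]

lemma initialForm_mul {k l : ℕ} {φ ψ : MvPowerSeries (Fin d) ℂ} (hφ : φ ∈ pP d (RL d Λ) n k)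
    (hψ : ψ ∈ pP d (RL d Λ) n l) :
    initialForm hfin (k + l) (φ * ψ) = initialForm hfin k φ * initialForm hfin l ψ := by
  rw [mem_pP_iff_le_weightedOrder] at hφ hψ
  apply toMvPowerSeries_injective
  rw [map_mul (toMvPowerSeries Λ), toMvPowerSeries_initialForm hfin _ hφ.1,
    toMvPowerSeries_initialForm hfin _ hψ.1,
    toMvPowerSeries_initialForm hfin _ ((RL d Λ).mul_mem hφ.1 hψ.1),
    weightedHomogeneousComponent_mul_of_le_weightedOrder hφ.2 hψ.2]

lemma initialForm_eq_zero_iff {k : ℕ} {φ : MvPowerSeries (Fin d) ℂ}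
    (hφ : φ ∈ pP d (RL d Λ) n k) :
    initialForm hfin k φ = 0 ↔ φ ∈ pP d (RL d Λ) n (k + 1) := by
  rw [mem_pP_iff_le_weightedOrder] at hφ ⊢
  rw [← toMvPowerSeries_injective.eq_iff, map_zero, toMvPowerSeries_initialForm hfin k hφ.1,
    weightedHomogeneousComponent_eq_zero_iff hφ.2, and_iff_right hφ.1]

end InitialForm

section GradedPieces

variable {d : ℕ} {Λ : AddSubmonoid (Fin d → ℕ)} {n : Fin d → ℕ}
  (hfin : ∀ k, {u : Λ | wt n (u : Fin d → ℕ) = k}.Finite) (k : ℕ)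

def initialFormOn : pP d (RL d Λ) n k →ₗ[ℂ] AddMonoidAlgebra ℂ Λ :=
  (initialForm hfin k).comp (pP d (RL d Λ) n k).subtype

lemma ker_initialFormOn : LinearMap.ker (initialFormOn hfin k) =
    (pP d (RL d Λ) n (k + 1)).comap (pP d (RL d Λ) n k).subtype := by
  ext φ
  exact initialForm_eq_zero_iff hfin φ.2

lemma range_initialFormOn : LinearMap.range (initialFormOn hfin k) = HkSub d Λ n k := by
  refine le_antisymm ?_ fun x hx =>
    ⟨⟨_, toMvPowerSeries_mem_pP hx⟩, initialForm_toMvPowerSeries hfin hx⟩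
  rintro _ ⟨φ, rfl⟩
  exact initialForm_mem_HkSub hfin k φ

def grPieceEquiv : grPiece d (RL d Λ) n k ≃ₗ[ℂ] HkSub d Λ n k :=
  (Submodule.quotEquivOfEq _ _ (ker_initialFormOn hfin k).symm).trans <|
    (initialFormOn hfin k).quotKerEquivRange.trans
      (LinearEquiv.ofEq _ _ (range_initialFormOn hfin k))

lemma grPieceEquiv_mk (φ : MvPowerSeries (Fin d) ℂ) (hφ : φ ∈ pP d (RL d Λ) n k) :
    (grPieceEquiv hfin k (Submodule.Quotient.mk ⟨φ, hφ⟩) : AddMonoidAlgebra ℂ Λ) =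
      initialForm hfin k φ :=
  rfl

end GradedPieces

theorem gr_toric_general (d : ℕ) (Λ : AddSubmonoid (Fin d → ℕ)) (hΛ : Λ.FG)
    (n : Fin d → ℕ) (hn : ∀ u ∈ Λ, u ≠ (0 : Fin d → ℕ) → 0 < wt n u) :
    ∃ e : ∀ k : ℕ, grPiece d (RL d Λ) n k ≃ₗ[ℂ] ↥(HkSub d Λ n k),
      IsGradedInitialFormIso d (RL d Λ) Λ n e ∧
      DirectSum.IsInternal (fun k : ℕ => HkSub d Λ n k) ∧
      ((⨆ k : ℕ, ⨆ _ : 1 ≤ k, HkSub d Λ n k : Submodule ℂ (AddMonoidAlgebra ℂ ↥Λ)) :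
          Set (AddMonoidAlgebra ℂ ↥Λ)) =
        (mIdl d Λ : Set (AddMonoidAlgebra ℂ ↥Λ)) := by
  have hfin := finite_setOf_wt_eq hΛ hn
  refine ⟨grPieceEquiv hfin, ⟨fun k φ hφ => ?_, fun k l φ ψ hφ hψ _ => ?_, fun _ => ?_⟩,
    isInternal_HkSub Λ n, iSup_HkSub_eq_mIdl hn⟩
  · funext u
    rw [grPieceEquiv_mk, coeff_initialForm]
  · simp only [grPieceEquiv_mk, initialForm_mul hfin hφ hψ]
  · rw [grPieceEquiv_mk, initialForm_one]

/-- for `Λ` finitely generated and `n` of positive weight on `Λ \ {0}`, the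
associated graded ring `gr(R_Λ) = ⨁ p_k/p_{k+1}` is isomorphic, as a graded `ℂ`-algebra,
to `AddMonoidAlgebra ℂ Λ` with the grading by the pieces `H_k`: there is a family of
`ℂ`-linear isomorphisms `p_k/p_{k+1} ≃ H_k` given by `n`-initial forms, compatible with
the induced multiplication and unit (`IsGradedInitialFormIso`), the `H_k` really form a
grading of `ℂ[Λ]` (internal direct sum), and the maximal graded ideal `⨁_{k ≥ 1}` is
carried onto the maximal graded ideal `𝔪_Λ`, i.e. `⨆_{k ≥ 1} H_k = 𝔪_Λ`. -/
theorem gr_toric (d : ℕ) (hd : 1 ≤ d) (Λ : AddSubmonoid (Fin d → ℕ)) (hΛ : Λ.FG)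
    (n : Fin d → ℕ) (hn : ∀ u ∈ Λ, u ≠ (0 : Fin d → ℕ) → 0 < wt n u) :
    ∃ e : ∀ k : ℕ, grPiece d (RL d Λ) n k ≃ₗ[ℂ] ↥(HkSub d Λ n k),
      IsGradedInitialFormIso d (RL d Λ) Λ n e ∧
      DirectSum.IsInternal (fun k : ℕ => HkSub d Λ n k) ∧
      ((⨆ k : ℕ, ⨆ _ : 1 ≤ k, HkSub d Λ n k : Submodule ℂ (AddMonoidAlgebra ℂ ↥Λ)) :
          Set (AddMonoidAlgebra ℂ ↥Λ)) =
        (mIdl d Λ : Set (AddMonoidAlgebra ℂ ↥Λ)) :=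
  gr_toric_general d Λ hΛ n hn
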